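/- The sequence g(n)^(1/n) converges as n → ∞, where g(n) is the maximum number of inclusion-wise minimal u–v separators over all graphs on n+2 vertices and pairs of distinct vertices u, v. -/

import Mathlib

/-- `Separates G u v T` means every walk from `u` to `v` in `G` meets `T`;
for `u, v ∉ T` this says `u` and `v` lie in different connected components of `G \ T`. -/
def Separates {V : Type*} (G : SimpleGraph V) (u v : V) (T : Set V) : Prop :=
  ∀ p : G.Walk u v, ∃ x ∈ p.support, x ∈ T

/-- `T` is an inclusion-wise minimal `u`–`v` separator in `G`:
`T ⊆ V(G) \ {u, v}`, removing `T` puts `u` and `v` in different connected components,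
and removing any proper subset `T' ⊊ T` leaves `u` and `v` in the same component. -/
def IsMinSeparator {V : Type*} (G : SimpleGraph V) (u v : V) (T : Set V) : Prop :=
  u ∉ T ∧ v ∉ T ∧ Separates G u v T ∧ ∀ T' ⊂ T, ¬ Separates G u v T'

/-- `mc G u v` is the number of inclusion-wise minimal `u`–`v` separators in `G`. -/
noncomputable def mc {V : Type*} (G : SimpleGraph V) (u v : V) : ℕ :=
  {T : Set V | IsMinSeparator G u v T}.ncard

/-- `g n` is the maximum of `mc G u v` over graphs `G` on `n + 2` vertices and
pairs of distinct vertices `u ≠ v`. -/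
noncomputable def g (n : ℕ) : ℕ :=
  sSup {k | ∃ (G : SimpleGraph (Fin (n + 2))) (u v : Fin (n + 2)), u ≠ v ∧ mc G u v = k}

/-- `T` is a vertex cut of `G`: removing `T` disconnects `G`, i.e. some two remaining
vertices lie in different connected components of `G \ T`. -/
def IsCutSet {V : Type*} (G : SimpleGraph V) (T : Set V) : Prop :=
  ∃ u v, u ∉ T ∧ v ∉ T ∧ Separates G u v T

/-- `T` is an inclusion-wise minimal vertex cut of `G`. -/
def IsMinCutSet {V : Type*} (G : SimpleGraph V) (T : Set V) : Prop :=
  IsCutSet G T ∧ ∀ T' ⊂ T, ¬ IsCutSet G T'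

/-- `c n` is the maximum number of inclusion-wise minimal vertex cuts of a graph
on `n` vertices. -/
noncomputable def c (n : ℕ) : ℕ :=
  sSup {k | ∃ G : SimpleGraph (Fin n), {T : Set (Fin n) | IsMinCutSet G T}.ncard = k}

/-- The binary entropy function `H(x) = -x log₂ x - (1 - x) log₂ (1 - x)`. -/
noncomputable def binH (x : ℝ) : ℝ :=
  -x * Real.logb 2 x - (1 - x) * Real.logb 2 (1 - x)

/-- The outer neighbourhood of `X` in `G`: all vertices outside `X` having a
neighbour in `X`. -/
def outNbhd {V : Type*} (G : SimpleGraph V) (X : Set V) : Set V :=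
  {y | y ∉ X ∧ ∃ x ∈ X, G.Adj x y}

/-- The vertex set of the connected component of `u` in `G \ T`: all vertices
reachable from `u` by a walk avoiding `T`. -/
def compOf {V : Type*} (G : SimpleGraph V) (T : Set V) (u : V) : Set V :=
  {x | ∃ p : G.Walk u x, ∀ y ∈ p.support, y ∉ T}


/-! ### Auxiliary lemmas for the proof -/

section AuxProof

open SimpleGraph

variable {V : Type*} {G : SimpleGraph V} {T C : Set V} {u v : V}

lemma separates_iff_not_mem_compOf :
    Separates G u v T ↔ v ∉ compOf G T u := by
  constructor
  · rintro h ⟨p, hp⟩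
    obtain ⟨x, hx, hxT⟩ := h p
    exact hp x hx hxT
  · intro h p
    by_contra hc
    push_neg at hc
    exact h ⟨p, hc⟩

lemma mem_compOf_self (hu : u ∉ T) : u ∈ compOf G T u :=
  ⟨SimpleGraph.Walk.nil, by simp [hu]⟩

lemma compOf_adj {x y : V} (hx : x ∈ compOf G T u) (h : G.Adj x y) (hy : y ∉ T) :
    y ∈ compOf G T u := by
  obtain ⟨p, hp⟩ := hx
  refine ⟨p.concat h, ?_⟩
  intro z hz
  rw [SimpleGraph.Walk.support_concat] at hz
  rcases List.mem_append.mp hz with hz | hz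
  · exact hp z hz
  · rw [List.mem_singleton] at hz
    exact hz ▸ hy

private lemma walk_closed (hC : ∀ x y, x ∈ C → G.Adj x y → y ∉ T → y ∈ C)
    {a b : V} (p : G.Walk a b) :
    (∀ y ∈ p.support, y ∉ T) → a ∈ C → b ∈ C := by
  induction p with
  | nil => exact fun _ h => h
  | cons h q ih =>
    intro hp ha
    refine ih (fun w hw => hp w (by simp [hw])) ?_
    exact hC _ _ ha h (hp _ (by simp))

lemma compOf_subset_of_closed (hu : u ∈ C)
    (hC : ∀ x y, x ∈ C → G.Adj x y → y ∉ T → y ∈ C) : compOf G T u ⊆ C := by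
  rintro z ⟨p, hp⟩
  exact walk_closed hC p hp hu

/-! #### Invariance of `mc` under graph isomorphisms -/

lemma separates_of_iso {V V' : Type*} {G : SimpleGraph V} {G' : SimpleGraph V'} (e : G ≃g G')
    {u v : V} {T : Set V} (h : Separates G u v T) : Separates G' (e u) (e v) (⇑e '' T) := by
  intro p
  obtain ⟨x, hx, hxT⟩ :=
    h ((p.map e.symm.toHom).copy (e.symm_apply_apply u) (e.symm_apply_apply v))
  rw [SimpleGraph.Walk.support_copy, SimpleGraph.Walk.support_map] at hx
  obtain ⟨y, hy, hxy⟩ := List.mem_map.mp hx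
  refine ⟨y, hy, ?_⟩
  have hex : (e : V → V') x = y := by
    rw [← hxy]; exact e.apply_symm_apply y
  exact ⟨x, hxT, hex⟩

lemma isMinSeparator_image_iso {V V' : Type*} {G : SimpleGraph V} {G' : SimpleGraph V'}
    (e : G ≃g G') {u v : V} {T : Set V} (h : IsMinSeparator G u v T) :
    IsMinSeparator G' (e u) (e v) (⇑e '' T) := by
  obtain ⟨hu, hv, hsep, hmin⟩ := h
  refine ⟨?_, ?_, separates_of_iso e hsep, ?_⟩
  · rintro ⟨x, hx, hex⟩
    exact hu ((e.injective hex) ▸ hx)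
  · rintro ⟨x, hx, hex⟩
    exact hv ((e.injective hex) ▸ hx)
  · intro T' hT' hsepT'
    have h2 := separates_of_iso e.symm hsepT'
    rw [e.symm_apply_apply, e.symm_apply_apply] at h2
    refine hmin (⇑e.symm '' T') ?_ h2
    constructor
    · intro x hx
      obtain ⟨y, hy, rfl⟩ := hx
      obtain ⟨z, hz, hze⟩ := hT'.1 hy
      have : z = e.symm y := by
        apply e.injective; rw [e.apply_symm_apply]; exact hze
      exact this ▸ hz
    · intro hcon
      apply hT'.2
      rintro y ⟨z, hz, rfl⟩
      obtain ⟨w, hw, hwz⟩ := hcon hz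
      have hzw : (e : V → V') z = w := by rw [← hwz, e.apply_symm_apply]
      exact hzw ▸ hw

lemma mc_iso {V V' : Type*} {G : SimpleGraph V} {G' : SimpleGraph V'}
    (e : G ≃g G') (u v : V) : mc G' (e u) (e v) = mc G u v := by
  unfold mc
  have hset : {T : Set V' | IsMinSeparator G' (e u) (e v) T} =
      (fun T => ⇑e '' T) '' {T : Set V | IsMinSeparator G u v T} := by
    ext T'
    simp only [Set.mem_setOf_eq, Set.mem_image]
    constructor
    · intro h
      refine ⟨⇑e.symm '' T', ?_, ?_⟩
      · have := isMinSeparator_image_iso e.symm h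
        rwa [e.symm_apply_apply, e.symm_apply_apply] at this
      · rw [Set.image_image]
        simp
    · rintro ⟨T, hT, rfl⟩
      exact isMinSeparator_image_iso e hT
  rw [hset]
  exact Set.ncard_image_of_injective _ (Set.image_injective.mpr e.injective)

/-! #### The bottom graph has exactly one minimal separator -/

lemma mc_bot (huv : u ≠ v) : mc (⊥ : SimpleGraph V) u v = 1 := by
  have hsep : Separates (⊥ : SimpleGraph V) u v ∅ := by
    intro p
    exfalso
    cases p with
    | nil => exact huv rfl
    | cons h q => exact h
  have hset : {T : Set V | IsMinSeparator (⊥ : SimpleGraph V) u v T} = {∅} := by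
    ext T
    simp only [Set.mem_setOf_eq, Set.mem_singleton_iff]
    constructor
    · rintro ⟨_, _, _, hmin⟩
      by_contra hne
      have : (∅ : Set V) ⊂ T := Set.empty_ssubset.mpr (Set.nonempty_iff_ne_empty.mpr hne)
      exact hmin ∅ this hsep
    · rintro rfl
      exact ⟨Set.notMem_empty u, Set.notMem_empty v, hsep,
        fun T' hT' => absurd (Set.empty_subset T') hT'.2⟩
  rw [mc, hset, Set.ncard_singleton]

lemma ncard_prod_eq {α β : Type*} (s : Set α) (t : Set β) :
    (s ×ˢ t).ncard = s.ncard * t.ncard := by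
  rw [← Nat.card_coe_set_eq, ← Nat.card_coe_set_eq, ← Nat.card_coe_set_eq,
    Nat.card_congr (Equiv.Set.prod s t), Nat.card_prod]

end AuxProof

/-! ### The glued (parallel composition) graph -/

section Glue

open SimpleGraph

variable {m n : ℕ}

/-- Vertex type for the parallel composition. -/
abbrev GlueV (m n : ℕ) (u2 v2 : Fin (n + 2)) : Type :=
  Fin (m + 2) ⊕ {x : Fin (n + 2) // x ≠ u2 ∧ x ≠ v2}

/-- Embedding of the second factor into the glued vertex set. -/
def glueι (u1 v1 : Fin (m + 2)) (u2 v2 : Fin (n + 2)) (x : Fin (n + 2)) : GlueV m n u2 v2 :=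
  if h : x = u2 then Sum.inl u1 else if h' : x = v2 then Sum.inl v1 else Sum.inr ⟨x, h, h'⟩

variable {u1 v1 : Fin (m + 2)} {u2 v2 : Fin (n + 2)}

lemma glueι_u2 : glueι u1 v1 u2 v2 u2 = Sum.inl u1 := by simp [glueι]

lemma glueι_v2 (h2 : u2 ≠ v2) : glueι u1 v1 u2 v2 v2 = Sum.inl v1 := by
  simp [glueι, h2.symm]

lemma glueι_inl {x : Fin (n + 2)} {c : Fin (m + 2)}
    (h : glueι u1 v1 u2 v2 x = Sum.inl c) :
    (x = u2 ∧ c = u1) ∨ (x = v2 ∧ c = v1) := by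
  unfold glueι at h
  split_ifs at h with hu hv <;> simp_all

lemma glueι_inj (h1 : u1 ≠ v1) : Function.Injective (glueι (m := m) u1 v1 u2 v2) := by
  intro x y hxy
  unfold glueι at hxy
  split_ifs at hxy <;> simp_all

/-- The parallel composition: both graphs glued at `u` and `v`. -/
def GlueG (G1 : SimpleGraph (Fin (m + 2))) (u1 v1 : Fin (m + 2))
    (G2 : SimpleGraph (Fin (n + 2))) (u2 v2 : Fin (n + 2)) :
    SimpleGraph (GlueV m n u2 v2) where
  Adj x y := x ≠ y ∧
    ((∃ a b, G1.Adj a b ∧ Sum.inl a = x ∧ Sum.inl b = y) ∨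
     (∃ a b, G2.Adj a b ∧ glueι u1 v1 u2 v2 a = x ∧ glueι u1 v1 u2 v2 b = y))
  symm := ⟨by
    rintro x y ⟨hne, ⟨a, b, h, rfl, rfl⟩ | ⟨a, b, h, rfl, rfl⟩⟩
    · exact ⟨hne.symm, Or.inl ⟨b, a, h.symm, rfl, rfl⟩⟩
    · exact ⟨hne.symm, Or.inr ⟨b, a, h.symm, rfl, rfl⟩⟩⟩
  loopless := ⟨by rintro x ⟨hne, -⟩; exact hne rfl⟩

variable {G1 : SimpleGraph (Fin (m + 2))} {G2 : SimpleGraph (Fin (n + 2))}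

/-- The first factor maps homomorphically into the glued graph. -/
def glueHom1 : G1 →g GlueG G1 u1 v1 G2 u2 v2 where
  toFun := Sum.inl
  map_rel' := fun {a b} h => ⟨by simp [h.ne], Or.inl ⟨a, b, h, rfl, rfl⟩⟩

/-- The second factor maps homomorphically into the glued graph. -/
def glueHom2 (h1 : u1 ≠ v1) : G2 →g GlueG G1 u1 v1 G2 u2 v2 where
  toFun := glueι u1 v1 u2 v2
  map_rel' := fun {a b} h =>
    ⟨fun e => h.ne (glueι_inj h1 e), Or.inr ⟨a, b, h, rfl, rfl⟩⟩

lemma glue_isMinSep (h1 : u1 ≠ v1) (h2 : u2 ≠ v2)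
    {T1 : Set (Fin (m + 2))} {T2 : Set (Fin (n + 2))}
    (hT1 : IsMinSeparator G1 u1 v1 T1) (hT2 : IsMinSeparator G2 u2 v2 T2) :
    IsMinSeparator (GlueG G1 u1 v1 G2 u2 v2) (Sum.inl u1) (Sum.inl v1)
      (Sum.inl '' T1 ∪ glueι u1 v1 u2 v2 '' T2) := by
  obtain ⟨hu1, hv1, sep1, min1⟩ := hT1
  obtain ⟨hu2, hv2, sep2, min2⟩ := hT2
  have hinj : Function.Injective (glueι (m := m) u1 v1 u2 v2) := glueι_inj h1
  set ι := glueι (m := m) u1 v1 u2 v2 with hι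
  set GG := GlueG G1 u1 v1 G2 u2 v2 with hGG
  set T : Set (GlueV m n u2 v2) := Sum.inl '' T1 ∪ ι '' T2 with hT
  -- membership facts
  have hUT : Sum.inl u1 ∉ T := by
    rintro (⟨c, hc, hce⟩ | ⟨c, hc, hce⟩)
    · exact hu1 ((Sum.inl.injEq _ _ ▸ hce : c = u1) ▸ hc)
    · rcases glueι_inl hce with ⟨rfl, -⟩ | ⟨rfl, -⟩
      · exact hu2 hc
      · exact hv2 hc
  have hVT : Sum.inl v1 ∉ T := by
    rintro (⟨c, hc, hce⟩ | ⟨c, hc, hce⟩)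
    · exact hv1 ((Sum.inl.injEq _ _ ▸ hce : c = v1) ▸ hc)
    · rcases glueι_inl hce with ⟨rfl, -⟩ | ⟨rfl, -⟩
      · exact hu2 hc
      · exact hv2 hc
  have hv1notC1 : v1 ∉ compOf G1 T1 u1 := separates_iff_not_mem_compOf.mp sep1
  have hv2notC2 : v2 ∉ compOf G2 T2 u2 := separates_iff_not_mem_compOf.mp sep2
  refine ⟨hUT, hVT, ?_, ?_⟩
  · -- Separation
    rw [separates_iff_not_mem_compOf]
    intro hmem
    have hsub : compOf GG T (Sum.inl u1) ⊆
        (Sum.inl '' compOf G1 T1 u1) ∪ (ι '' compOf G2 T2 u2) := by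
      apply compOf_subset_of_closed
      · exact Or.inl ⟨u1, mem_compOf_self hu1, rfl⟩
      · rintro x y hx ⟨hne, ⟨a, b, hab, rfl, rfl⟩ | ⟨a, b, hab, rfl, rfl⟩⟩ hyT
        · -- edge from side 1
          have ha : a ∈ compOf G1 T1 u1 := by
            rcases hx with ⟨c, hc, hce⟩ | ⟨c, hc, hce⟩
            · exact (Sum.inl.injEq _ _ ▸ hce : c = a) ▸ hc
            · rcases glueι_inl hce with ⟨rfl, rfl⟩ | ⟨rfl, rfl⟩
              · exact mem_compOf_self hu1
              · exact absurd hc hv2notC2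
          have hbT : b ∉ T1 := fun hb => hyT (Or.inl ⟨b, hb, rfl⟩)
          exact Or.inl ⟨b, compOf_adj ha hab hbT, rfl⟩
        · -- edge from side 2
          have ha : a ∈ compOf G2 T2 u2 := by
            rcases hx with ⟨c, hc, hce⟩ | ⟨c, hc, hce⟩
            · rcases glueι_inl hce.symm with ⟨rfl, rfl⟩ | ⟨rfl, rfl⟩
              · exact mem_compOf_self hu2
              · exact absurd hc hv1notC1
            · exact (hinj hce) ▸ hc
          have hbT : b ∉ T2 := fun hb => hyT (Or.inr ⟨b, hb, rfl⟩)
          exact Or.inr ⟨b, compOf_adj ha hab hbT, rfl⟩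
    rcases hsub hmem with ⟨c, hc, hce⟩ | ⟨c, hc, hce⟩
    · exact hv1notC1 ((Sum.inl.injEq _ _ ▸ hce : c = v1) ▸ hc)
    · rcases glueι_inl hce with ⟨rfl, hcv⟩ | ⟨rfl, -⟩
      · exact h1 hcv.symm
      · exact hv2notC2 hc
  · -- Minimality
    intro T' hT' hsep'
    obtain ⟨t, htT, htT'⟩ := Set.exists_of_ssubset hT'
    have hT'sub : T' ⊆ T := hT'.1
    rcases htT with ⟨t1, ht1, rfl⟩ | ⟨t2, ht2, rfl⟩
    · -- missing element on side 1
      set T1' : Set (Fin (m + 2)) := {a | a ∈ T1 ∧ (Sum.inl a : GlueV m n u2 v2) ∈ T'} with hT1'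
      have hss : T1' ⊂ T1 :=
        (Set.ssubset_iff_of_subset (fun a ha => ha.1)).mpr
          ⟨t1, ht1, fun h => htT' h.2⟩
      have hnosep := min1 T1' hss
      rw [Separates] at hnosep
      push_neg at hnosep
      obtain ⟨p, hp⟩ := hnosep
      obtain ⟨x, hx, hxT'⟩ := hsep' (p.map (glueHom1 (u1 := u1) (v1 := v1)))
      erw [SimpleGraph.Walk.support_map] at hx
      obtain ⟨a, ha, rfl⟩ := List.mem_map.mp hx
      rcases hT'sub hxT' with ⟨c, hc, hce⟩ | ⟨c, hc, hce⟩
      · have : c = a := Sum.inl.injEq _ _ ▸ hce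
        exact hp a ha ⟨this ▸ hc, hxT'⟩
      · rcases glueι_inl hce with ⟨rfl, -⟩ | ⟨rfl, -⟩
        · exact hu2 hc
        · exact hv2 hc
    · -- missing element on side 2
      set T2' : Set (Fin (n + 2)) := {a | a ∈ T2 ∧ ι a ∈ T'} with hT2'
      have hss : T2' ⊂ T2 :=
        (Set.ssubset_iff_of_subset (fun a ha => ha.1)).mpr
          ⟨t2, ht2, fun h => htT' h.2⟩
      have hnosep := min2 T2' hss
      rw [Separates] at hnosep
      push_neg at hnosep
      obtain ⟨p, hp⟩ := hnosep
      obtain ⟨x, hx, hxT'⟩ := hsep'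
        ((p.map (glueHom2 (G1 := G1) (u1 := u1) (v1 := v1) h1)).copy glueι_u2 (glueι_v2 h2))
      erw [SimpleGraph.Walk.support_copy, SimpleGraph.Walk.support_map] at hx
      obtain ⟨a, ha, rfl⟩ := List.mem_map.mp hx
      rcases hT'sub hxT' with ⟨c, hc, hce⟩ | ⟨c, hc, hce⟩
      · rcases glueι_inl hce.symm with ⟨-, rfl⟩ | ⟨-, rfl⟩
        · exact hu1 hc
        · exact hv1 hc
      · exact hp a ha ⟨(hinj hce) ▸ hc, hxT'⟩

lemma glue_mc_le (h1 : u1 ≠ v1) (h2 : u2 ≠ v2) :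
    mc G1 u1 v1 * mc G2 u2 v2 ≤
      mc (GlueG G1 u1 v1 G2 u2 v2) (Sum.inl u1) (Sum.inl v1) := by
  classical
  set S1 := {T : Set (Fin (m + 2)) | IsMinSeparator G1 u1 v1 T} with hS1
  set S2 := {T : Set (Fin (n + 2)) | IsMinSeparator G2 u2 v2 T} with hS2
  set f : Set (Fin (m + 2)) × Set (Fin (n + 2)) → Set (GlueV m n u2 v2) :=
    fun p => Sum.inl '' p.1 ∪ glueι u1 v1 u2 v2 '' p.2 with hf
  have hsub : f '' (S1 ×ˢ S2) ⊆
      {T | IsMinSeparator (GlueG G1 u1 v1 G2 u2 v2) (Sum.inl u1) (Sum.inl v1) T} := by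
    rintro x ⟨⟨T1, T2⟩, ⟨hA, hB⟩, rfl⟩
    exact glue_isMinSep h1 h2 hA hB
  have hinjOn : Set.InjOn f (S1 ×ˢ S2) := by
    rintro ⟨T1, T2⟩ ⟨hA, hB⟩ ⟨T1', T2'⟩ ⟨hA', hB'⟩ heq
    have key1 : ∀ (T1'' : Set (Fin (m+2))) (T2'' : Set (Fin (n+2))), IsMinSeparator G2 u2 v2 T2'' →
        ∀ a, (Sum.inl a ∈ Sum.inl '' T1'' ∪ glueι u1 v1 u2 v2 '' T2'') ↔ a ∈ T1'' := by
      intro T1'' T2'' hmin a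
      constructor
      · rintro (⟨c, hc, hce⟩ | ⟨c, hc, hce⟩)
        · exact (Sum.inl.injEq _ _ ▸ hce : c = a) ▸ hc
        · rcases glueι_inl hce with ⟨rfl, -⟩ | ⟨rfl, -⟩
          · exact absurd hc hmin.1
          · exact absurd hc hmin.2.1
      · intro ha; exact Or.inl ⟨a, ha, rfl⟩
    have key2 : ∀ (T1'' : Set (Fin (m+2))) (T2'' : Set (Fin (n+2))), IsMinSeparator G1 u1 v1 T1'' →
        ∀ a, (glueι u1 v1 u2 v2 a ∈ Sum.inl '' T1'' ∪ glueι u1 v1 u2 v2 '' T2'') ↔ a ∈ T2'' := by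
      intro T1'' T2'' hmin a
      constructor
      · rintro (⟨c, hc, hce⟩ | ⟨c, hc, hce⟩)
        · rcases glueι_inl hce.symm with ⟨-, rfl⟩ | ⟨-, rfl⟩
          · exact absurd hc hmin.1
          · exact absurd hc hmin.2.1
        · exact (glueι_inj h1 hce) ▸ hc
      · intro ha; exact Or.inr ⟨a, ha, rfl⟩
    have e1 : T1 = T1' := by
      ext a
      rw [← key1 T1 T2 hB a, ← key1 T1' T2' hB' a]
      simp only [hf] at heq
      rw [show (Sum.inl '' T1 ∪ glueι u1 v1 u2 v2 '' T2) =
        (Sum.inl '' T1' ∪ glueι u1 v1 u2 v2 '' T2') from heq]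
    have e2 : T2 = T2' := by
      ext a
      rw [← key2 T1 T2 hA a, ← key2 T1' T2' hA' a]
      simp only [hf] at heq
      rw [show (Sum.inl '' T1 ∪ glueι u1 v1 u2 v2 '' T2) =
        (Sum.inl '' T1' ∪ glueι u1 v1 u2 v2 '' T2') from heq]
    simp [e1, e2]
  calc mc G1 u1 v1 * mc G2 u2 v2 = (S1 ×ˢ S2).ncard := (ncard_prod_eq S1 S2).symm
    _ = (f '' (S1 ×ˢ S2)).ncard := (Set.ncard_image_of_injOn hinjOn).symm
    _ ≤ mc (GlueG G1 u1 v1 G2 u2 v2) (Sum.inl u1) (Sum.inl v1) :=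
        Set.ncard_le_ncard hsub (Set.toFinite _)

lemma card_glueV (h2 : u2 ≠ v2) : Fintype.card (GlueV m n u2 v2) = m + n + 2 := by
  have hs : Fintype.card {x : Fin (n + 2) // x ≠ u2 ∧ x ≠ v2} = n := by
    rw [Fintype.card_subtype]
    have : (Finset.univ.filter fun x : Fin (n + 2) => x ≠ u2 ∧ x ≠ v2) =
        (Finset.univ.erase v2).erase u2 := by
      ext x
      simp [Finset.mem_erase, and_comm]
    rw [this, Finset.card_erase_of_mem, Finset.card_erase_of_mem] <;>
      simp [h2, Finset.mem_erase]
  simp only [Fintype.card_sum, hs, Fintype.card_fin]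
  omega

lemma glue_exists (h1 : u1 ≠ v1) (h2 : u2 ≠ v2) :
    ∃ (G : SimpleGraph (Fin (m + n + 2))) (u v : Fin (m + n + 2)), u ≠ v ∧
      mc G1 u1 v1 * mc G2 u2 v2 ≤ mc G u v := by
  classical
  obtain e : GlueV m n u2 v2 ≃ Fin (m + n + 2) := Fintype.equivFinOfCardEq (card_glueV h2)
  set GG := GlueG G1 u1 v1 G2 u2 v2 with hGG
  set G : SimpleGraph (Fin (m + n + 2)) := GG.comap e.symm.toEmbedding with hG
  have iso : G ≃g GG := SimpleGraph.Iso.comap e.symm GG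
  refine ⟨G, iso.symm (Sum.inl u1), iso.symm (Sum.inl v1), ?_, ?_⟩
  · intro hcon
    exact h1 (Sum.inl_injective (iso.symm.injective hcon))
  · rw [mc_iso iso.symm (Sum.inl u1) (Sum.inl v1)]
    exact glue_mc_le h1 h2

end Glue

/-! ### Properties of `g` -/

section GProps

lemma g_set_bddAbove (n : ℕ) :
    BddAbove {k | ∃ (G : SimpleGraph (Fin (n + 2))) (u v : Fin (n + 2)), u ≠ v ∧ mc G u v = k} := by
  classical
  apply Set.Finite.bddAbove
  apply Set.Finite.subset (Set.finite_range
    (fun p : SimpleGraph (Fin (n + 2)) × Fin (n + 2) × Fin (n + 2) => mc p.1 p.2.1 p.2.2))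
  rintro k ⟨G, u, v, -, rfl⟩
  exact ⟨(G, u, v), rfl⟩

lemma one_mem_g_set (n : ℕ) :
    1 ∈ {k | ∃ (G : SimpleGraph (Fin (n + 2))) (u v : Fin (n + 2)), u ≠ v ∧ mc G u v = k} := by
  refine ⟨⊥, 0, 1, ?_, mc_bot ?_⟩ <;>
    · intro hcon
      have := congrArg Fin.val hcon
      simp [Fin.val_zero, Fin.val_one] at this
 
lemma one_le_g (n : ℕ) : 1 ≤ g n :=
  le_csSup (g_set_bddAbove n) (one_mem_g_set n)

lemma g_supermult (m n : ℕ) : g m * g n ≤ g (m + n) := by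
  obtain ⟨G1, u1, v1, h1, hmc1⟩ :=
    Nat.sSup_mem ⟨1, one_mem_g_set m⟩ (g_set_bddAbove m)
  obtain ⟨G2, u2, v2, h2, hmc2⟩ :=
    Nat.sSup_mem ⟨1, one_mem_g_set n⟩ (g_set_bddAbove n)
  obtain ⟨G, u, v, huv, hle⟩ := glue_exists (G1 := G1) (G2 := G2) h1 h2
  calc g m * g n = mc G1 u1 v1 * mc G2 u2 v2 := by unfold g; rw [hmc1, hmc2]
    _ ≤ mc G u v := hle
    _ ≤ g (m + n) := le_csSup (g_set_bddAbove (m + n)) ⟨G, u, v, huv, rfl⟩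

lemma g_le_pow (n : ℕ) : g n ≤ 2 ^ (n + 2) := by
  apply csSup_le ⟨1, one_mem_g_set n⟩
  rintro k ⟨G, u, v, -, rfl⟩
  classical
  calc mc G u v ≤ (Set.univ : Set (Set (Fin (n + 2)))).ncard :=
        Set.ncard_le_ncard (Set.subset_univ _) (Set.toFinite _)
    _ = 2 ^ (n + 2) := by
        rw [Set.ncard_univ, Nat.card_eq_fintype_card, Fintype.card_set, Fintype.card_fin]

end GProps

open Filter

/-- The sequence `g n ^ (1 / n)` converges as `n → ∞`. -/
theorem g_pow_inv_converges :
    ∃ L : ℝ, Tendsto (fun n : ℕ => (g n : ℝ) ^ (1 / (n : ℝ))) atTop (nhds L) := by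
  have hpos : ∀ k : ℕ, (0 : ℝ) < (g k : ℝ) := fun k => by
    exact_mod_cast Nat.lt_of_lt_of_le Nat.zero_lt_one (one_le_g k)
  set u : ℕ → ℝ := fun k => -Real.log (g k) with hu
  have hsub : Subadditive u := by
    intro a b
    have hlog : Real.log (g a) + Real.log (g b) ≤ Real.log (g (a + b)) := by
      rw [← Real.log_mul (ne_of_gt (hpos a)) (ne_of_gt (hpos b))]
      apply Real.log_le_log (mul_pos (hpos a) (hpos b))
      have := g_supermult a b
      push_cast
      exact_mod_cast this
    simp only [hu]
    linarith
  have hbdd : BddBelow (Set.range fun k => u k / k) := by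
    refine ⟨-(3 * Real.log 2), ?_⟩
    rintro x ⟨k, rfl⟩
    rcases Nat.eq_zero_or_pos k with rfl | hk
    · simp only [Nat.cast_zero, div_zero]
      have : (0:ℝ) ≤ Real.log 2 := Real.log_nonneg one_le_two
      linarith
    · have hklog : Real.log (g k) ≤ 3 * k * Real.log 2 := by
        calc Real.log (g k) ≤ Real.log ((2 : ℝ) ^ (k + 2)) := by
              apply Real.log_le_log (hpos k)
              exact_mod_cast g_le_pow k
          _ = (k + 2 : ℕ) * Real.log 2 := by rw [Real.log_pow]
          _ ≤ 3 * k * Real.log 2 := by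
              have h2 : (0:ℝ) ≤ Real.log 2 := Real.log_nonneg one_le_two
              have : ((k + 2 : ℕ) : ℝ) ≤ 3 * k := by
                push_cast
                have : (1:ℝ) ≤ k := by exact_mod_cast hk
                linarith
              nlinarith
      have hkpos : (0:ℝ) < k := by exact_mod_cast hk
      show -(3 * Real.log 2) ≤ -Real.log ((g k : ℕ) : ℝ) / (k : ℝ)
      rw [neg_div, neg_le_neg_iff, div_le_iff₀ hkpos]
      calc Real.log (g k) ≤ 3 * k * Real.log 2 := hklog
        _ = 3 * Real.log 2 * k := by ring
  have hlim := hsub.tendsto_lim hbdd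
  refine ⟨Real.exp (-hsub.lim), ?_⟩
  have h2 : Tendsto (fun k : ℕ => Real.log (g k) / k) atTop (nhds (-hsub.lim)) := by
    have := hlim.neg
    simp only [hu, neg_div, neg_neg] at this ⊢
    exact this
  have h3 : Tendsto (fun k : ℕ => Real.exp (Real.log (g k) / k)) atTop
      (nhds (Real.exp (-hsub.lim))) := (Real.continuous_exp.tendsto _).comp h2
  refine h3.congr fun k => ?_
  rw [Real.rpow_def_of_pos (hpos k), mul_one_div]
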